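/- arXiv:2402.13555 — 3 statements merged into one kernel-verified Lean document; each statement's English description precedes it below -/
import Mathlib

section
/- Let μ, μ_g, t ∈ ℝ³, let Q ∈ O(3) be orthogonal with μ_g = Q.mulVec μ + t, and let L, L_g : Matrix (Fin 3) (Fin 3) ℝ be invertible matrices satisfying L_g * L_gᵀ = Q * L * Lᵀ * Qᵀ. Define the affine transformations F(v) = L⁻¹.mulVec (v − μ) and F_g(v) = L_g⁻¹.mulVec (v − μ_g). Then there exists an orthogonal matrix O ∈ O(3), namely O = L_g⁻¹ * Q * L, such that for every point v ∈ ℝ³, F_g(Q.mulVec v + t) = O.mulVec (F v). -/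
open Matrix

/-!
The rigid motion carries `μ` to `μ_g`, so it turns `v - μ` into `Q (v - μ)`; both sides are then
images of `v - μ`, under `L_g⁻¹ Q` and under `O L⁻¹ = L_g⁻¹ Q L L⁻¹`. `O` is orthogonal because
`L_g` and `Q L` have the same Gram matrix `L_g L_gᵀ = (Q L)(Q L)ᵀ`.
-/

namespace Matrix

variable {n R : Type*} [Fintype n] [CommRing R]

theorem mulVec_add_sub_mulVec_add (Q : Matrix n n R) (v μ t : n → R) :
    Q *ᵥ v + t - (Q *ᵥ μ + t) = Q *ᵥ (v - μ) := by
  rw [mulVec_sub]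
  abel

theorem nonsing_inv_mul_mem_orthogonalGroup_of_mul_transpose_eq [DecidableEq n]
    {A B : Matrix n n R} (hA : IsUnit A.det) (hAB : A * Aᵀ = B * Bᵀ) : A⁻¹ * B ∈ orthogonalGroup n R := by
  have hAT : IsUnit Aᵀ.det := by rwa [det_transpose]
  rw [mem_orthogonalGroup_iff]
  calc A⁻¹ * B * (A⁻¹ * B)ᵀ = A⁻¹ * (B * Bᵀ) * Aᵀ⁻¹ := by
        simp only [transpose_mul, transpose_nonsing_inv, Matrix.mul_assoc]
    _ = 1 := by
        rw [← hAB, nonsing_inv_mul_cancel_left _ _ hA, mul_nonsing_inv _ hAT]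

end Matrix

theorem affine_standardization_equivariant_general
    (μ μg t : Fin 3 → ℝ) (Q L Lg : Matrix (Fin 3) (Fin 3) ℝ)
    (hμ : μg = Q.mulVec μ + t)
    (hL : IsUnit L.det) (hLg : IsUnit Lg.det)
    (hcov : Lg * Lgᵀ = Q * L * Lᵀ * Qᵀ) :
    ∃ O ∈ Matrix.orthogonalGroup (Fin 3) ℝ, O = Lg⁻¹ * Q * L ∧
      ∀ v : Fin 3 → ℝ,
        Lg⁻¹.mulVec (Q.mulVec v + t - μg) = O.mulVec (L⁻¹.mulVec (v - μ)) := by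
  have hgram : Lg * Lgᵀ = (Q * L) * (Q * L)ᵀ := by
    rw [hcov, transpose_mul, Matrix.mul_assoc (Q * L)]
  refine ⟨Lg⁻¹ * Q * L, ?_, rfl, fun v => ?_⟩
  · rw [Matrix.mul_assoc]
    exact nonsing_inv_mul_mem_orthogonalGroup_of_mul_transpose_eq hLg hgram
  · rw [hμ, mulVec_add_sub_mulVec_add, mulVec_mulVec, mulVec_mulVec,
      mul_nonsing_inv_cancel_right _ _ hL]

/-- The receptor-specific affine transformation intertwines rigid motions with an
orthogonal transformation of the standard space: there is an orthogonal `O`,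
namely `O = L_g⁻¹ * Q * L`, with `F_g (Q v + t) = O (F v)` for all `v`. -/
theorem affine_standardization_equivariant
    (μ μg t : Fin 3 → ℝ) (Q L Lg : Matrix (Fin 3) (Fin 3) ℝ)
    (hQ : Q ∈ Matrix.orthogonalGroup (Fin 3) ℝ)
    (hμ : μg = Q.mulVec μ + t)
    (hL : IsUnit L.det) (hLg : IsUnit Lg.det)
    (hcov : Lg * Lgᵀ = Q * L * Lᵀ * Qᵀ) :
    ∃ O ∈ Matrix.orthogonalGroup (Fin 3) ℝ, O = Lg⁻¹ * Q * L ∧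
      ∀ v : Fin 3 → ℝ,
        Lg⁻¹.mulVec (Q.mulVec v + t - μg) = O.mulVec (L⁻¹.mulVec (v - μ)) :=
  affine_standardization_equivariant_general μ μg t Q L Lg hμ hL hLg hcov
end

section
/- (Distance invariance in the standard space.) Let μ, μ_g, t ∈ ℝ³, Q ∈ O(3) orthogonal with μ_g = Q.mulVec μ + t, and L, L_g invertible 3×3 real matrices with L_g * L_gᵀ = Q * L * Lᵀ * Qᵀ. Define F(v) = L⁻¹.mulVec (v − μ) and F_g(v) = L_g⁻¹.mulVec (v − μ_g). Then for any two points x_i, x_j ∈ ℝ³, the Euclidean distance ‖F_g(Q.mulVec x_i + t) − F_g(Q.mulVec x_j + t)‖ equals ‖F(x_i) − F(x_j)‖. -/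
open Matrix

/-- View a vector `Fin 3 → ℝ` as a point of Euclidean space (ℓ² norm). -/
noncomputable def toE (v : Fin 3 → ℝ) : EuclideanSpace ℝ (Fin 3) :=
  (WithLp.equiv 2 (Fin 3 → ℝ)).symm v

lemma toE_sub (a b : Fin 3 → ℝ) : toE a - toE b = toE (a - b) := rfl

lemma norm_toE_eq (u : Fin 3 → ℝ) : ‖toE u‖ = Real.sqrt (u ⬝ᵥ u) := by
  rw [EuclideanSpace.norm_eq]
  congr 1
  simp [dotProduct, toE, sq]

lemma norm_toE_orth (M : Matrix (Fin 3) (Fin 3) ℝ) (h : Mᵀ * M = 1) (v : Fin 3 → ℝ) :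
    ‖toE (M.mulVec v)‖ = ‖toE v‖ := by
  rw [norm_toE_eq, norm_toE_eq]
  congr 1
  calc M.mulVec v ⬝ᵥ M.mulVec v = ((M *ᵥ v) ᵥ* M) ⬝ᵥ v := by
        rw [Matrix.dotProduct_mulVec]
      _ = (v ᵥ* (Mᵀ * M)) ⬝ᵥ v := by rw [← Matrix.vecMul_vecMul, Matrix.vecMul_transpose]
      _ = v ⬝ᵥ v := by rw [h, Matrix.vecMul_one]

/-- Distance invariance in the standard space: pairwise Euclidean distances after
the receptor-specific affine transformation are invariant under rigid motions of
the input (with the affine transformation re-derived accordingly). -/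
theorem dist_invariant_standard_space
    (μ μg t : Fin 3 → ℝ) (Q L Lg : Matrix (Fin 3) (Fin 3) ℝ)
    (hQ : Q ∈ Matrix.orthogonalGroup (Fin 3) ℝ)
    (hμ : μg = Q.mulVec μ + t)
    (hL : IsUnit L.det) (hLg : IsUnit Lg.det)
    (hcov : Lg * Lgᵀ = Q * L * Lᵀ * Qᵀ)
    (xi xj : Fin 3 → ℝ) :
    ‖toE (Lg⁻¹.mulVec (Q.mulVec xi + t - μg)) - toE (Lg⁻¹.mulVec (Q.mulVec xj + t - μg))‖
      = ‖toE (L⁻¹.mulVec (xi - μ)) - toE (L⁻¹.mulVec (xj - μ))‖ := by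
  subst hμ
  have key1 : ∀ x : Fin 3 → ℝ, Q.mulVec x + t - (Q.mulVec μ + t) = Q.mulVec (x - μ) := by
    intro x; rw [Matrix.mulVec_sub]; abel
  rw [key1, key1, toE_sub, toE_sub, ← Matrix.mulVec_sub, ← Matrix.mulVec_sub,
    ← Matrix.mulVec_sub]
  have hd : xi - μ - (xj - μ) = xi - xj := by abel
  rw [hd]
  set M := Lg⁻¹ * Q * L with hM
  have hQt : Q * Qᵀ = 1 := by
    have := Matrix.mem_orthogonalGroup_iff (Fin 3) ℝ |>.mp hQ
    simpa [Matrix.star_eq_conjTranspose] using this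
  have hMMt : M * Mᵀ = 1 := by
    have h1 : Lg * Lg⁻¹ = 1 := Matrix.mul_nonsing_inv _ hLg
    have h2 : Lgᵀ * Lgᵀ⁻¹ = 1 := Matrix.mul_nonsing_inv _ (by simpa using hLg)
    calc M * Mᵀ = Lg⁻¹ * (Q * L * Lᵀ * Qᵀ) * Lgᵀ⁻¹ := by
          rw [hM]
          simp [Matrix.transpose_mul, Matrix.transpose_nonsing_inv, Matrix.mul_assoc]
      _ = Lg⁻¹ * (Lg * Lgᵀ) * Lgᵀ⁻¹ := by rw [hcov]
      _ = Lg⁻¹ * Lg * (Lgᵀ * Lgᵀ⁻¹) := by noncomm_ring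
      _ = 1 := by rw [Matrix.nonsing_inv_mul _ hLg, h2, Matrix.one_mul]
  have hMtM : Mᵀ * M = 1 := mul_eq_one_comm.mp hMMt
  have hrw : Lg⁻¹ *ᵥ (Q *ᵥ (xi - xj)) = M *ᵥ (L⁻¹ *ᵥ (xi - xj)) := by
    rw [Matrix.mulVec_mulVec, Matrix.mulVec_mulVec, hM, Matrix.mul_assoc,
      Matrix.mul_nonsing_inv _ hL, Matrix.mul_one]
  rw [hrw]
  exact norm_toE_orth M hMtM _
end

section
/- (Proposition 3.1, equivariant part, single layer.) Let V = Fin n, H and E types, h : V → H node features, e : V → V → E edge features, N : V → Finset V neighborhoods, φ_m : H → H → ℝ → E → M with M an additive commutative monoid, and φ_x : M → ℝ an arbitrary scalar-valued function. For coordinates y : V → (Fin 3 → ℝ) define the equivariant layer output f⃗(y) : V → (Fin 3 → ℝ) by f⃗(y) i = y i + ∑ j ∈ N i, φ_x (φ_m (h i) (h j) (‖y i − y j‖²) (e i j)) • (y i − y j). Let μ, μ_g, t ∈ ℝ³, Q ∈ O(3) orthogonal with μ_g = Q.mulVec μ + t, and L, L_g invertible 3×3 real matrices with L_g * L_gᵀ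 = Q * L * Lᵀ * Qᵀ; set F(v) = L⁻¹.mulVec (v − μ), F⁻¹(v) = L.mulVec v + μ, F_g(v) = L_g⁻¹.mulVec (v − μ_g), F_g⁻¹(v) = L_g.mulVec v + μ_g. Then for any coordinates x : V → (Fin 3 → ℝ) and every node i, Q.mulVec (F⁻¹ (f⃗(fun k => F (x k)) i)) + t = F_g⁻¹ (f⃗(fun k => F_g (Q.mulVec (x k) + t)) i); i.e., computing the equivariant layer in the standard space and mapping back with F⁻¹ commutes with rigid motions. -/
/-!
Put `R := L_g⁻¹ Q L`. The covariance condition makes `R` orthogonal, and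
`F_g (Q x + t) = R (F x)`, `L_g R = Q L`. The layer sees its input only through squared
distances, which `R` preserves, and is linear in the differences `y i - y j`, so it commutes
with `R`; mapping back with `F_g⁻¹` turns `R` into `Q L` and gives the claim.
-/

open Matrix

namespace Matrix

variable {n : Type*} [Fintype n] [DecidableEq n]

theorem inv_mul_mem_orthogonalGroup_of_mul_transpose_eq {R : Type*} [CommRing R]
    {A B : Matrix n n R} (hB : IsUnit B.det) (h : B * Bᵀ = A * Aᵀ) :
    B⁻¹ * A ∈ orthogonalGroup n R := by
  have hBt : IsUnit Bᵀ.det := by rwa [det_transpose]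
  rw [mem_orthogonalGroup_iff]
  calc B⁻¹ * A * (B⁻¹ * A)ᵀ = B⁻¹ * (A * Aᵀ) * Bᵀ⁻¹ := by
        rw [transpose_mul, transpose_nonsing_inv]; simp only [Matrix.mul_assoc]
    _ = B⁻¹ * B * (Bᵀ * Bᵀ⁻¹) := by rw [← h]; simp only [Matrix.mul_assoc]
    _ = 1 := by rw [nonsing_inv_mul _ hB, mul_nonsing_inv _ hBt, Matrix.one_mul]

theorem norm_toLp_mulVec_of_mem_orthogonalGroup {A : Matrix n n ℝ}
    (hA : A ∈ orthogonalGroup n ℝ) (v : n → ℝ) :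
    ‖WithLp.toLp 2 (A *ᵥ v)‖ = ‖WithLp.toLp 2 v‖ := by
  have norm_sq (w : n → ℝ) : ‖WithLp.toLp 2 w‖ ^ 2 = w ⬝ᵥ w := by
    rw [← real_inner_self_eq_norm_sq, EuclideanSpace.inner_eq_star_dotProduct, star_trivial]
  refine (sq_eq_sq₀ (norm_nonneg _) (norm_nonneg _)).mp ?_
  rw [norm_sq, norm_sq, dotProduct_mulVec, ← mulVec_transpose, mulVec_mulVec,
    (mem_orthogonalGroup_iff' n ℝ).mp hA, one_mulVec]

end Matrix

/-- The paper's weights `φ_x (m i j)` are folded into `w i j`, a function of the squared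
distance. -/
noncomputable def egnnCoordUpdate {ι n : Type*} [Fintype n] (N : ι → Finset ι)
    (w : ι → ι → ℝ → ℝ) (y : ι → n → ℝ) (i : ι) : n → ℝ :=
  y i + ∑ j ∈ N i, w i j (‖WithLp.toLp 2 (y i) - WithLp.toLp 2 (y j)‖ ^ 2) • (y i - y j)

theorem egnnCoordUpdate_mulVec {ι n : Type*} [Fintype n] [DecidableEq n] (N : ι → Finset ι)
    (w : ι → ι → ℝ → ℝ) {A : Matrix n n ℝ} (hA : A ∈ orthogonalGroup n ℝ)
    (y : ι → n → ℝ) (i : ι) :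
    egnnCoordUpdate N w (fun k => A *ᵥ y k) i = A *ᵥ egnnCoordUpdate N w y i := by
  have hdist (j : ι) : ‖WithLp.toLp 2 (A *ᵥ y i) - WithLp.toLp 2 (A *ᵥ y j)‖
      = ‖WithLp.toLp 2 (y i) - WithLp.toLp 2 (y j)‖ := by
    rw [← WithLp.toLp_sub, ← WithLp.toLp_sub, ← mulVec_sub,
      norm_toLp_mulVec_of_mem_orthogonalGroup hA]
  simp only [egnnCoordUpdate, hdist, mulVec_add, mulVec_sum, mulVec_smul, mulVec_sub]

theorem gnn_equivariant_output_equivariant_general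
    (n : ℕ) (H E M : Type*) [AddCommMonoid M]
    (h : Fin n → H) (e : Fin n → Fin n → E) (N : Fin n → Finset (Fin n))
    (φm : H → H → ℝ → E → M) (φx : M → ℝ)
    (μ μg t : Fin 3 → ℝ) (Q L Lg : Matrix (Fin 3) (Fin 3) ℝ)
    (hμ : μg = Q.mulVec μ + t)
    (hL : IsUnit L.det) (hLg : IsUnit Lg.det)
    (hcov : Lg * Lgᵀ = Q * L * Lᵀ * Qᵀ)
    (fvec : (Fin n → (Fin 3 → ℝ)) → Fin n → (Fin 3 → ℝ))
    (hfvec : ∀ (y : Fin n → (Fin 3 → ℝ)) (i : Fin n),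
      fvec y i = y i + ∑ j ∈ N i,
        φx (φm (h i) (h j) (‖toE (y i) - toE (y j)‖ ^ 2) (e i j)) • (y i - y j))
    (x : Fin n → (Fin 3 → ℝ)) (i : Fin n) :
    Q.mulVec (L.mulVec (fvec (fun k => L⁻¹.mulVec (x k - μ)) i) + μ) + t
      = Lg.mulVec (fvec (fun k => Lg⁻¹.mulVec (Q.mulVec (x k) + t - μg)) i) + μg := by
  have hlayer : fvec = egnnCoordUpdate N fun i j r => φx (φm (h i) (h j) r (e i j)) :=
    funext fun y => funext (hfvec y)
  set R := Lg⁻¹ * (Q * L)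
  have hR : R ∈ orthogonalGroup (Fin 3) ℝ :=
    inv_mul_mem_orthogonalGroup_of_mul_transpose_eq hLg (by
      rw [hcov, transpose_mul]; simp only [Matrix.mul_assoc])
  have hinput : (fun k => Lg⁻¹ *ᵥ (Q *ᵥ x k + t - μg)) = fun k => R *ᵥ (L⁻¹ *ᵥ (x k - μ)) := by
    funext k
    rw [hμ, add_sub_add_right_eq_sub, ← mulVec_sub, mulVec_mulVec, mulVec_mulVec, Matrix.mul_assoc,
      Matrix.mul_assoc, mul_nonsing_inv _ hL, Matrix.mul_one]
  rw [hinput, hlayer, egnnCoordUpdate_mulVec N _ hR, mulVec_mulVec, ← Matrix.mul_assoc,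
    mul_nonsing_inv _ hLg, Matrix.one_mul, hμ, mulVec_add, mulVec_mulVec]
  abel

/-- Proposition 3.1, equivariant part (single layer): computing the equivariant
coordinate update of a scalarization-based E(3)-equivariant GNN layer in the
standard space and mapping back with `F⁻¹` commutes with rigid motions. -/
theorem gnn_equivariant_output_equivariant
    (n : ℕ) (H E M : Type*) [AddCommMonoid M]
    (h : Fin n → H) (e : Fin n → Fin n → E) (N : Fin n → Finset (Fin n))
    (φm : H → H → ℝ → E → M) (φx : M → ℝ)
    (μ μg t : Fin 3 → ℝ) (Q L Lg : Matrix (Fin 3) (Fin 3) ℝ)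
    (hQ : Q ∈ Matrix.orthogonalGroup (Fin 3) ℝ)
    (hμ : μg = Q.mulVec μ + t)
    (hL : IsUnit L.det) (hLg : IsUnit Lg.det)
    (hcov : Lg * Lgᵀ = Q * L * Lᵀ * Qᵀ)
    (fvec : (Fin n → (Fin 3 → ℝ)) → Fin n → (Fin 3 → ℝ))
    (hfvec : ∀ (y : Fin n → (Fin 3 → ℝ)) (i : Fin n),
      fvec y i = y i + ∑ j ∈ N i,
        φx (φm (h i) (h j) (‖toE (y i) - toE (y j)‖ ^ 2) (e i j)) • (y i - y j))
    (x : Fin n → (Fin 3 → ℝ)) (i : Fin n) :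
    Q.mulVec (L.mulVec (fvec (fun k => L⁻¹.mulVec (x k - μ)) i) + μ) + t
      = Lg.mulVec (fvec (fun k => Lg⁻¹.mulVec (Q.mulVec (x k) + t - μg)) i) + μg :=
  gnn_equivariant_output_equivariant_general n H E M h e N φm φx μ μg t Q L Lg hμ hL hLg hcov fvec
    hfvec x i
end
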